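/- If q_0, ..., q_{s-1} is a sequence of positive integers with either both q_0 ≥ 2 and q_{s-1} ≥ 2, or q_0 = q_{s-1} = 1, then |[q_0, ..., q_{s-1}]*| < (1/2)·[q_0, ..., q_{s-1}], i.e., the absolute value of the anticontinuant is less than half the continuant. -/

import Mathlib

/-- The continuant of a finite sequence of integers. -/
def cont : List ℤ → ℤ
  | [] => 1
  | [a] => a
  | a :: b :: l => a * cont (b :: l) + cont l


/-- The anticontinuant `[q₀,…,q_{s-1}]* = [q₀,…,q_{s-2}] − [q₁,…,q_{s-1}]`. -/
def anticont (l : List ℤ) : ℤ := cont l.dropLast - cont l.tail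

/-!
Write `X = [q₀, …, q_{s-2}]` and `Y = [q₁, …, q_{s-1}]`, both positive, so that the
anticontinuant is `X - Y`. Expanding the continuant at either end gives
`[q] = q₀ Y + [q₂, …, q_{s-1}] = q_{s-1} X + [q₀, …, q_{s-3}]`; when both end quotients are at
least 2 this yields `2X < [q]` and `2Y < [q]`, hence `2|X - Y| < [q]`.
When both end quotients are 1, write `q = 1, m, 1`. Then `X - Y = [m.tail] - [m.dropLast]`,
with both terms between 1 and `[m]`, while `[q] ≥ [m] + [m.dropLast] + [m.tail]`.
-/

theorem cont_cons_cons (a b : ℤ) (l : List ℤ) : cont (a :: b :: l) = a * cont (b :: l) + cont l :=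
  rfl

theorem cont_cons (a : ℤ) {l : List ℤ} (hl : l ≠ []) : cont (a :: l) = a * cont l + cont l.tail := by
  obtain ⟨b, t, rfl⟩ := List.exists_cons_of_ne_nil hl
  rfl

theorem cont_append_singleton (a : ℤ) : ∀ {l : List ℤ}, l ≠ [] →
    cont (l ++ [a]) = a * cont l + cont l.dropLast
  | [b], _ => by simp [cont]; ring
  | [b, c], _ => by simp [cont]; ring
  | b :: c :: d :: t, _ => by
    have hc := cont_append_singleton a (l := c :: d :: t) (by simp)
    have hd := cont_append_singleton a (l := d :: t) (by simp)
    simp only [List.cons_append, cont_cons_cons, List.dropLast_cons_cons] at hc hd ⊢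
    rw [hc, hd]
    ring

theorem cont_pos : ∀ {l : List ℤ}, (∀ q ∈ l, 0 < q) → 0 < cont l
  | [], _ => zero_lt_one
  | [a], h => h a (by simp)
  | a :: b :: t, h => by
    simp only [List.forall_mem_cons] at h
    have hbt := cont_pos (l := b :: t) (List.forall_mem_cons.2 h.2)
    have ht := cont_pos h.2.2
    rw [cont_cons_cons]
    nlinarith [h.1]

theorem cont_tail_le_cont {l : List ℤ} (hl : ∀ q ∈ l, 0 < q) : cont l.tail ≤ cont l := by
  rcases l with _ | ⟨a, _ | ⟨b, t⟩⟩
  · rfl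
  · exact hl a (List.mem_singleton_self a)
  · simp only [List.forall_mem_cons] at hl
    have hbt := cont_pos (l := b :: t) (List.forall_mem_cons.2 hl.2)
    have ht := cont_pos hl.2.2
    rw [List.tail_cons, cont_cons_cons]
    nlinarith [hl.1]

theorem cont_le_cont_append_singleton {a : ℤ} {l : List ℤ} (ha : 0 < a) (hl : ∀ q ∈ l, 0 < q) :
    cont l ≤ cont (l ++ [a]) := by
  rcases eq_or_ne l [] with rfl | hne
  · exact ha
  · have h := cont_pos hl
    have hd := cont_pos fun q hq => hl q (List.dropLast_subset l hq)
    rw [cont_append_singleton a hne]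
    nlinarith

theorem cont_dropLast_le_cont {l : List ℤ} (hl : ∀ q ∈ l, 0 < q) : cont l.dropLast ≤ cont l := by
  rcases l.eq_nil_or_concat' with rfl | ⟨m, a, rfl⟩
  · rfl
  · rw [List.dropLast_concat]
    exact cont_le_cont_append_singleton (hl a (by simp))
      fun q hq => hl q (List.mem_append_left _ hq)

theorem two_mul_cont_lt_cont_cons {a : ℤ} {l : List ℤ} (ha : 2 ≤ a) (hne : l ≠ [])
    (hl : ∀ q ∈ l, 0 < q) : 2 * cont l < cont (a :: l) := by
  have h := cont_pos hl
  have ht := cont_pos fun q hq => hl q (List.mem_of_mem_tail hq)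
  rw [cont_cons a hne]
  nlinarith

theorem two_mul_cont_lt_cont_append_singleton {a : ℤ} {l : List ℤ} (ha : 2 ≤ a) (hne : l ≠ [])
    (hl : ∀ q ∈ l, 0 < q) : 2 * cont l < cont (l ++ [a]) := by
  have h := cont_pos hl
  have hd := cont_pos fun q hq => hl q (List.dropLast_subset l hq)
  rw [cont_append_singleton a hne]
  nlinarith

theorem anticont_cons_append_singleton (a b : ℤ) (l : List ℤ) :
    anticont (a :: (l ++ [b])) = cont (a :: l) - cont (l ++ [b]) := by
  rw [anticont, ← List.cons_append, List.dropLast_concat]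
  rfl

theorem two_mul_abs_anticont_lt_of_two_le {a b : ℤ} {l : List ℤ} (ha : 2 ≤ a) (hb : 2 ≤ b)
    (hl : ∀ q ∈ l, 0 < q) : 2 * |anticont (a :: (l ++ [b]))| < cont (a :: (l ++ [b])) := by
  have hlb : ∀ q ∈ l ++ [b], 0 < q := List.forall_mem_append.2 ⟨hl, by simp; omega⟩
  have hal : ∀ q ∈ a :: l, 0 < q := List.forall_mem_cons.2 ⟨by omega, hl⟩
  have hX := two_mul_cont_lt_cont_append_singleton hb (List.cons_ne_nil a l) hal
  have hY := two_mul_cont_lt_cont_cons ha (List.concat_ne_nil b l) hlb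
  rw [List.cons_append] at hX
  rw [anticont_cons_append_singleton]
  rcases abs_cases (cont (a :: l) - cont (l ++ [b])) with ⟨h, -⟩ | ⟨h, -⟩ <;>
    linarith [cont_pos hal, cont_pos hlb]

theorem two_mul_abs_anticont_one_cons_append_one_lt {l : List ℤ} (hl : ∀ q ∈ l, 0 < q) :
    2 * |anticont (1 :: (l ++ [1]))| < cont (1 :: (l ++ [1])) := by
  rcases eq_or_ne l [] with rfl | hne
  · decide
  have htl : ∀ q ∈ l.tail, 0 < q := fun q hq => hl q (List.mem_of_mem_tail hq)
  have hcons : cont (1 :: l) = cont l + cont l.tail := by rw [cont_cons 1 hne, one_mul]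
  have hsnoc : cont (l ++ [1]) = cont l + cont l.dropLast := by
    rw [cont_append_singleton 1 hne, one_mul]
  have hwhole : cont (1 :: (l ++ [1])) = cont (l ++ [1]) + cont (l.tail ++ [1]) := by
    rw [cont_cons 1 (List.concat_ne_nil 1 l), one_mul, List.tail_append_of_ne_nil hne]
  have hT := cont_tail_le_cont hl
  have hD := cont_dropLast_le_cont hl
  have hT1 := cont_le_cont_append_singleton one_pos htl
  rw [anticont_cons_append_singleton, hwhole, hcons, hsnoc, add_sub_add_left_eq_sub]
  rcases abs_cases (cont l.tail - cont l.dropLast) with ⟨h, -⟩ | ⟨h, -⟩ <;>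
    linarith [cont_pos htl, cont_pos fun q hq => hl q (List.dropLast_subset l hq)]

theorem abs_anticont_lt_half_cont_general (l : List ℤ) (hpos : ∀ q ∈ l, 0 < q)
    (hends : (2 ≤ l.head! ∧ 2 ≤ l.getLast!) ∨ (l.head! = 1 ∧ l.getLast! = 1)) :
    2 * |anticont l| < cont l := by
  rcases l with _ | ⟨a, t⟩
  · decide
  rcases t.eq_nil_or_concat' with rfl | ⟨m, b, rfl⟩
  · simpa [anticont, cont] using hpos
  have hlast : (a :: (m ++ [b])).getLast! = b :=
    List.getLast!_of_getLast? (List.getLast?_concat (l := a :: m))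
  simp only [List.head!_cons, hlast] at hends
  have hm : ∀ q ∈ m, 0 < q := fun q hq => hpos q (by simp [hq])
  rcases hends with ⟨ha, hb⟩ | ⟨rfl, rfl⟩
  · exact two_mul_abs_anticont_lt_of_two_le ha hb hm
  · exact two_mul_abs_anticont_one_cons_append_one_lt hm

/-- If either both end quotients are ≥ 2 or both equal 1, then the absolute value of the
anticontinuant is less than half the continuant. -/
theorem abs_anticont_lt_half_cont (l : List ℤ) (hne : l ≠ []) (hpos : ∀ q ∈ l, 0 < q)
    (hends : (2 ≤ l.head! ∧ 2 ≤ l.getLast!) ∨ (l.head! = 1 ∧ l.getLast! = 1)) :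
    2 * |anticont l| < cont l :=
  abs_anticont_lt_half_cont_general l hpos hends
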